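/- Let -∞ ≤ a < b ≤ ∞, let n ∈ ℤ, let {x_k}_{k=n}^∞ ⊂ (a,b) be a strictly increasing sequence, and let {τ_k}_{k=n+1}^∞ be a geometrically decreasing sequence of positive numbers, i.e. sup_{k≥n+1} τ_{k+1}/τ_k < 1. Then there exist positive constants c₁, c₂ (depending only on the geometric decay ratio) such that for every nonnegative measurable function g on (a,b): c₁ · sup_{k≥n+1} τ_k ∫_{x_{k-1}}^{x_k} g ≤ sup_{k≥n+1} τ_k ∫_{x_n}^{x_k} g ≤ c₂ · sup_{k≥n+1} τ_k ∫_{x_{k-1}}^{x_k} g. -/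

import Mathlib

/-!
One may take `c₁ = 1`, since `(x (k-1), x k) ⊆ (x n, x k)`. For the upper bound write
`F k = ∫_{x n}^{x k} g` and `f k = ∫_{x (k-1)}^{x k} g`, so `F (k+1) ≤ F k + f (k+1)`. With
`S = sup τ_k f_k` the decay `τ (k+1) ≤ ρ τ k` gives `τ (k+1) F (k+1) ≤ ρ (τ k F k) + S`, and the
bound `τ k F k ≤ (1 - ρ)⁻¹ S` is preserved because `(1 - ρ)⁻¹ = 1 + ρ (1 - ρ)⁻¹`.
-/

open MeasureTheory ENNReal Set

noncomputable section

/-- The open interval `(a, b)` of real numbers, with extended-real endpoints. -/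
def Iab (a b : EReal) : Set ℝ := {x : ℝ | a < (x : EReal) ∧ (x : EReal) < b}

theorem ENNReal.one_add_mul_inv_one_sub (r : ℝ≥0∞) : 1 + r * (1 - r)⁻¹ = (1 - r)⁻¹ := by
  rw [← ENNReal.tsum_geometric_add_one, ← ENNReal.tsum_geometric,
    tsum_eq_zero_add' (f := fun n => r ^ n) ENNReal.summable, pow_zero]

theorem mul_le_inv_one_sub_mul_of_le_add {ρ S : ℝ≥0∞} {m : ℤ} {τ F f : ℤ → ℝ≥0∞}
    (hτ : ∀ k, m ≤ k → τ (k + 1) ≤ ρ * τ k)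
    (hF₀ : F m ≤ f m) (hF : ∀ k, m ≤ k → F (k + 1) ≤ F k + f (k + 1))
    (hS : ∀ k, m ≤ k → τ k * f k ≤ S) :
    ∀ k, m ≤ k → τ k * F k ≤ (1 - ρ)⁻¹ * S := by
  refine Int.leInduction ?_ fun k hk ih => ?_
  · calc τ m * F m ≤ S := (mul_le_mul_right hF₀ _).trans (hS m le_rfl)
      _ ≤ (1 - ρ)⁻¹ * S := le_mul_of_one_le_left zero_le (ENNReal.one_le_inv.2 tsub_le_self)
  · calc τ (k + 1) * F (k + 1)
        ≤ τ (k + 1) * F k + τ (k + 1) * f (k + 1) := by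
          rw [← mul_add]; exact mul_le_mul_right (hF k hk) _
      _ ≤ ρ * (τ k * F k) + S := by
          rw [← mul_assoc]
          exact add_le_add (mul_le_mul_left (hτ k hk) _) (hS (k + 1) (by omega))
      _ ≤ ρ * ((1 - ρ)⁻¹ * S) + S := add_le_add_left (mul_le_mul_right ih ρ) S
      _ = (1 - ρ)⁻¹ * S := by
          nth_rw 2 [← one_add_mul_inv_one_sub ρ]
          rw [← mul_assoc, add_mul, one_mul, add_comm]

theorem setLIntegral_Ioo_le_add {α : Type*} [LinearOrder α] [MeasurableSpace α]
    {μ : Measure α} [NullSingletonClass μ] (f : α → ℝ≥0∞) (a b c : α) :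
    ∫⁻ s in Ioo a c, f s ∂μ ≤ (∫⁻ s in Ioo a b, f s ∂μ) + ∫⁻ s in Ioo b c, f s ∂μ := by
  have hcover : Ioo a c ⊆ Ioc a b ∪ Ioo b c := fun s ⟨has, hsc⟩ =>
    (le_or_gt s b).imp (fun hsb => ⟨has, hsb⟩) (fun hbs => ⟨hbs, hsc⟩)
  calc ∫⁻ s in Ioo a c, f s ∂μ ≤ ∫⁻ s in Ioc a b ∪ Ioo b c, f s ∂μ := lintegral_mono_set hcover
    _ ≤ (∫⁻ s in Ioc a b, f s ∂μ) + ∫⁻ s in Ioo b c, f s ∂μ := lintegral_union_le _ _ _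
    _ = (∫⁻ s in Ioo a b, f s ∂μ) + ∫⁻ s in Ioo b c, f s ∂μ := by
        rw [setLIntegral_congr (Ioo_ae_eq_Ioc (a := a) (b := b))]

theorem statement8 (ρ : ℝ≥0∞) (hρ : ρ < 1) :
    ∃ c₁ c₂ : ℝ≥0∞, 0 < c₁ ∧ c₂ < ∞ ∧
      ∀ (a b : EReal), a < b →
      ∀ (n : ℤ) (x : ℤ → ℝ) (τ : ℤ → ℝ≥0∞),
        (∀ k, n ≤ k → x k ∈ Iab a b) →
        (∀ k, n ≤ k → x k < x (k + 1)) →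
        (∀ k, n + 1 ≤ k → 0 < τ k ∧ τ k < ∞) →
        (∀ k, n + 1 ≤ k → τ (k + 1) ≤ ρ * τ k) →
        ∀ g : ℝ → ℝ≥0∞, Measurable g →
          c₁ * (⨆ (k : ℤ) (_ : n + 1 ≤ k), τ k * ∫⁻ s in Ioo (x (k - 1)) (x k), g s) ≤
              (⨆ (k : ℤ) (_ : n + 1 ≤ k), τ k * ∫⁻ s in Ioo (x n) (x k), g s) ∧
            (⨆ (k : ℤ) (_ : n + 1 ≤ k), τ k * ∫⁻ s in Ioo (x n) (x k), g s) ≤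
              c₂ * ⨆ (k : ℤ) (_ : n + 1 ≤ k), τ k * ∫⁻ s in Ioo (x (k - 1)) (x k), g s := by
  refine ⟨1, (1 - ρ)⁻¹, one_pos, inv_lt_top.2 (tsub_pos_of_lt hρ), ?_⟩
  intro a b _ n x τ _ hx _ hτ g _
  have hmono : MonotoneOn x (Ici n) :=
    monotoneOn_of_le_add_one ordConnected_Ici fun k _ hk _ => (hx k hk).le
  constructor
  · rw [one_mul]
    refine iSup₂_mono fun k hk => mul_le_mul_right (lintegral_mono_set ?_) _
    exact Ioo_subset_Ioo_left (hmono self_mem_Ici (mem_Ici.2 (by omega)) (by omega))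
  · refine iSup₂_le (mul_le_inv_one_sub_mul_of_le_add hτ (by simp) (fun k _ => ?_)
      fun k hk => le_iSup₂_of_le k hk le_rfl)
    simpa using setLIntegral_Ioo_le_add g (x n) (x k) (x (k + 1))
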